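/- arXiv:1802.07200 — 2 statements merged into one kernel-verified Lean document; each statement's English description precedes it below -/
import Mathlib

section
/- Let Ω ⊂ ℂ be a bounded open set and let w, v : closure(Ω) → ℝ be continuous functions that are twice continuously differentiable on Ω, with v ≥ 0 on closure(Ω). Suppose k, g, k̲, ḡ : closure(Ω) → ℝ are continuous functions satisfying k ≥ k̲ > 0 and |g| ≤ ḡ pointwise, and suppose that Δw − k²·w = g and Δv − k̲²·v = −ḡ hold on Ω. If |w| ≤ v at every point of the topological boundary ∂Ω, then |w| ≤ v at every point of closure(Ω). -/
/-!
Apply the weak maximum principle to `w - v` and to `-w - v`. If `u = ±w - v` had a positive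
maximum on the compact set `closure Ω`, the boundary hypothesis would put it at an interior
point, where the second derivative of `u` along every line is `≤ 0`, so `Δu ≤ 0`. But there
`±w > v ≥ 0`, and the two equations together with `|g| ≤ ḡ` and `k ≥ k̲ > 0` give
`Δu ≥ k² (±w) - k̲² v ≥ k̲² u > 0`.
-/

open Filter Topology

/-- Directional derivative of `f : ℂ → E` at `z` in the direction `v ∈ ℂ`. -/
noncomputable def dirDeriv {E : Type*} [NormedAddCommGroup E] [NormedSpace ℝ E]
    (v : ℂ) (f : ℂ → E) (z : ℂ) : E :=
  deriv (fun t : ℝ => f (z + t • v)) 0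

/-- The flat Laplacian `Δf = ∂²f/∂x² + ∂²f/∂y²` of a function on `ℂ ≅ ℝ²`
(applied componentwise when the target is `ℂ`). -/
noncomputable def flatLaplacian {E : Type*} [NormedAddCommGroup E] [NormedSpace ℝ E]
    (f : ℂ → E) (z : ℂ) : E :=
  dirDeriv 1 (dirDeriv 1 f) z + dirDeriv Complex.I (dirDeriv Complex.I f) z

theorem ContDiffAt.iteratedDeriv_sub_apply {𝕜 F : Type*} [NontriviallyNormedField 𝕜]
    [NormedAddCommGroup F] [NormedSpace 𝕜 F] {n : ℕ} {f g : 𝕜 → F} {x : 𝕜}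
    (hf : ContDiffAt 𝕜 n f x) (hg : ContDiffAt 𝕜 n g x) :
    iteratedDeriv n (f - g) x = iteratedDeriv n f x - iteratedDeriv n g x := by
  simp [iteratedDeriv_eq_iteratedFDeriv, iteratedFDeriv_sub_apply hf hg]

theorem IsLocalMax.deriv_deriv_nonpos {f : ℝ → ℝ} {x : ℝ} (hmax : IsLocalMax f x)
    (hc : ContinuousAt f x) : deriv (deriv f) x ≤ 0 := by
  by_contra! hpos
  -- if `f'' x > 0`, then `x` is also a local minimum, so `f` is locally constant near `x`
  have hmin : IsLocalMin f x := isLocalMin_of_deriv_deriv_pos hpos hmax.deriv_eq_zero hc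
  have hconst : f =ᶠ[𝓝 x] fun _ => f x := by
    filter_upwards [hmax, hmin] with y hy₁ hy₂ using le_antisymm hy₁ hy₂
  have hderiv : deriv f =ᶠ[𝓝 x] fun _ => 0 := by
    simpa using hconst.deriv
  simp [hderiv.deriv_eq] at hpos

section Complex

variable {E : Type*} [NormedAddCommGroup E] [NormedSpace ℝ E]

theorem dirDeriv_dirDeriv (e : ℂ) (f : ℂ → E) (z : ℂ) :
    dirDeriv e (dirDeriv e f) z = deriv (deriv fun t : ℝ => f (z + t • e)) 0 := by
  have hshift : (fun t : ℝ => dirDeriv e f (z + t • e)) = deriv fun t : ℝ => f (z + t • e) := by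
    funext t
    have h := deriv_comp_add_const (fun s : ℝ => f (z + s • e)) t 0
    simp only [zero_add, add_smul, ← add_assoc] at h
    simpa only [dirDeriv, add_right_comm _ _ (t • e)] using h
  exact congrArg (deriv · 0) hshift

theorem flatLaplacian_eq_deriv_deriv (f : ℂ → E) (z : ℂ) :
    flatLaplacian f z = deriv (deriv fun t : ℝ => f (z + t • 1)) 0 +
      deriv (deriv fun t : ℝ => f (z + t • Complex.I)) 0 := by
  rw [flatLaplacian, dirDeriv_dirDeriv, dirDeriv_dirDeriv]

theorem ContDiffAt.comp_line {f : ℂ → E} {z : ℂ} (hf : ContDiffAt ℝ 2 f z) (e : ℂ) :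
    ContDiffAt ℝ 2 (fun t : ℝ => f (z + t • e)) 0 := by
  have hline : ContDiff ℝ 2 fun t : ℝ => z + t • e :=
    contDiff_const.add (contDiff_id.smul contDiff_const)
  exact (by simpa using hf : ContDiffAt ℝ 2 f (z + (0 : ℝ) • e)).comp 0 hline.contDiffAt

theorem ContDiffAt.flatLaplacian_sub {f g : ℂ → E} {z : ℂ} (hf : ContDiffAt ℝ 2 f z)
    (hg : ContDiffAt ℝ 2 g z) :
    flatLaplacian (f - g) z = flatLaplacian f z - flatLaplacian g z := by
  have h (e : ℂ) : deriv (deriv fun t : ℝ => (f - g) (z + t • e)) 0 =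
      deriv (deriv fun t : ℝ => f (z + t • e)) 0 - deriv (deriv fun t : ℝ => g (z + t • e)) 0 := by
    have h := (hf.comp_line e).iteratedDeriv_sub_apply (hg.comp_line e)
    simp only [iteratedDeriv_succ, iteratedDeriv_zero] at h
    exact h
  simp only [flatLaplacian_eq_deriv_deriv]
  rw [h 1, h Complex.I]
  abel

theorem flatLaplacian_neg (f : ℂ → E) (z : ℂ) : flatLaplacian (-f) z = -flatLaplacian f z := by
  simp only [flatLaplacian_eq_deriv_deriv, Pi.neg_apply, deriv.fun_neg', deriv.fun_neg]
  abel

end Complex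

theorem IsLocalMax.flatLaplacian_nonpos {f : ℂ → ℝ} {z : ℂ} (hmax : IsLocalMax f z)
    (hc : ContinuousAt f z) : flatLaplacian f z ≤ 0 := by
  have h (e : ℂ) : deriv (deriv fun t : ℝ => f (z + t • e)) 0 ≤ 0 := by
    have hline : ContinuousAt (fun t : ℝ => z + t • e) 0 := by fun_prop
    rw [← show z + (0 : ℝ) • e = z by simp] at hmax hc
    exact IsLocalMax.deriv_deriv_nonpos
      (hmax.comp_continuous (g := fun t : ℝ => z + t • e) hline)
      (hc.comp (f := fun t : ℝ => z + t • e) hline)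
  rw [flatLaplacian_eq_deriv_deriv]
  linarith [h 1, h Complex.I]

theorem nonpos_on_closure_of_flatLaplacian_pos {Ω : Set ℂ} (hΩ : IsOpen Ω)
    (hbdd : Bornology.IsBounded Ω) {u : ℂ → ℝ} (hu : ContinuousOn u (closure Ω))
    (hΔ : ∀ z ∈ Ω, 0 < u z → 0 < flatLaplacian u z) (hbdry : ∀ z ∈ frontier Ω, u z ≤ 0) :
    ∀ z ∈ closure Ω, u z ≤ 0 := by
  by_contra! ⟨z₁, hz₁, hu₁⟩
  obtain ⟨z₀, hz₀, hmax⟩ := hbdd.isCompact_closure.exists_isMaxOn ⟨z₁, hz₁⟩ hu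
  have hpos : 0 < u z₀ := hu₁.trans_le (hmax hz₁)
  have hz₀Ω : z₀ ∈ Ω := by
    by_contra hz₀Ω
    exact (hbdry z₀ (hΩ.frontier_eq ▸ ⟨hz₀, hz₀Ω⟩)).not_gt hpos
  have hnhds : closure Ω ∈ 𝓝 z₀ := mem_of_superset (hΩ.mem_nhds hz₀Ω) subset_closure
  exact (hΔ z₀ hz₀Ω hpos).not_ge
    ((hmax.isLocalMax hnhds).flatLaplacian_nonpos (hu.continuousAt hnhds))

theorem le_on_closure_of_helmholtz_le {Ω : Set ℂ} (hΩ : IsOpen Ω) (hbdd : Bornology.IsBounded Ω)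
    {w v k kbar : ℂ → ℝ}
    (hw_cont : ContinuousOn w (closure Ω)) (hw_C2 : ContDiffOn ℝ 2 w Ω)
    (hv_cont : ContinuousOn v (closure Ω)) (hv_C2 : ContDiffOn ℝ 2 v Ω)
    (hv_nonneg : ∀ z ∈ Ω, 0 ≤ v z) (hk_ge : ∀ z ∈ Ω, kbar z ≤ k z)
    (hkbar_pos : ∀ z ∈ Ω, 0 < kbar z)
    (hLvw : ∀ z ∈ Ω, flatLaplacian v z - kbar z ^ 2 * v z ≤ flatLaplacian w z - k z ^ 2 * w z)
    (hbdry : ∀ z ∈ frontier Ω, w z ≤ v z) :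
    ∀ z ∈ closure Ω, w z ≤ v z := by
  have hsub := nonpos_on_closure_of_flatLaplacian_pos hΩ hbdd (hw_cont.sub hv_cont) ?_
    (fun z hz => sub_nonpos.mpr (hbdry z hz))
  · exact fun z hz => sub_nonpos.mp (hsub z hz)
  intro z hz hpos
  rw [Pi.sub_apply, sub_pos] at hpos
  rw [(hw_C2.contDiffAt (hΩ.mem_nhds hz)).flatLaplacian_sub (hv_C2.contDiffAt (hΩ.mem_nhds hz))]
  have hk_sq : kbar z ^ 2 ≤ k z ^ 2 := pow_le_pow_left₀ (hkbar_pos z hz).le (hk_ge z hz) 2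
  have hw_pos : 0 < w z := (hv_nonneg z hz).trans_lt hpos
  -- `Δw - Δv ≥ k² w - k̲² v = (k² - k̲²) w + k̲² (w - v)`
  nlinarith [hLvw z hz, mul_nonneg (sub_nonneg.mpr hk_sq) hw_pos.le,
    mul_pos (pow_pos (hkbar_pos z hz) 2) (sub_pos.mpr hpos)]

theorem statement0_general
    (Ω : Set ℂ) (hΩopen : IsOpen Ω) (hΩbdd : Bornology.IsBounded Ω)
    (w v k g kbar gbar : ℂ → ℝ)
    (hw_cont : ContinuousOn w (closure Ω)) (hw_C2 : ContDiffOn ℝ 2 w Ω)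
    (hv_cont : ContinuousOn v (closure Ω)) (hv_C2 : ContDiffOn ℝ 2 v Ω)
    (hv_nonneg : ∀ z ∈ closure Ω, 0 ≤ v z)
    (hk_ge : ∀ z ∈ closure Ω, kbar z ≤ k z)
    (hkbar_pos : ∀ z ∈ closure Ω, 0 < kbar z)
    (hg_le : ∀ z ∈ closure Ω, |g z| ≤ gbar z)
    (hw_eq : ∀ z ∈ Ω, flatLaplacian w z - (k z) ^ 2 * w z = g z)
    (hv_eq : ∀ z ∈ Ω, flatLaplacian v z - (kbar z) ^ 2 * v z = -(gbar z))
    (hbdry : ∀ z ∈ frontier Ω, |w z| ≤ v z) :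
    ∀ z ∈ closure Ω, |w z| ≤ v z := by
  have hv_nonnegΩ : ∀ z ∈ Ω, 0 ≤ v z := fun z hz => hv_nonneg z (subset_closure hz)
  have hk_geΩ : ∀ z ∈ Ω, kbar z ≤ k z := fun z hz => hk_ge z (subset_closure hz)
  have hkbar_posΩ : ∀ z ∈ Ω, 0 < kbar z := fun z hz => hkbar_pos z (subset_closure hz)
  have hg_leΩ (z : ℂ) (hz : z ∈ Ω) := abs_le.mp (hg_le z (subset_closure hz))
  have upper := le_on_closure_of_helmholtz_le hΩopen hΩbdd hw_cont hw_C2 hv_cont hv_C2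
    hv_nonnegΩ hk_geΩ hkbar_posΩ
    (fun z hz => by linarith [hw_eq z hz, hv_eq z hz, (hg_leΩ z hz).1])
    (fun z hz => (le_abs_self _).trans (hbdry z hz))
  have lower := le_on_closure_of_helmholtz_le hΩopen hΩbdd hw_cont.neg hw_C2.neg hv_cont hv_C2
    hv_nonnegΩ hk_geΩ hkbar_posΩ
    (fun z hz => by
      rw [flatLaplacian_neg, Pi.neg_apply]
      linarith [hw_eq z hz, hv_eq z hz, (hg_leΩ z hz).2])
    (fun z hz => (neg_le_abs _).trans (hbdry z hz))
  exact fun z hz => abs_le'.mpr ⟨upper z hz, lower z hz⟩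

/-- maximum principle, Lemma 5.2: Let `Ω ⊂ ℂ` be a bounded open set,
`w, v` continuous on `closure Ω`, `C²` on `Ω`, `v ≥ 0`, with `Δw − k²w = g`,
`Δv − k̲²v = −ḡ` on `Ω`, `k ≥ k̲ > 0`, `|g| ≤ ḡ`. If `|w| ≤ v` on `∂Ω`,
then `|w| ≤ v` on `closure Ω`. -/
theorem statement0
    (Ω : Set ℂ) (hΩopen : IsOpen Ω) (hΩbdd : Bornology.IsBounded Ω)
    (w v k g kbar gbar : ℂ → ℝ)
    (hw_cont : ContinuousOn w (closure Ω)) (hw_C2 : ContDiffOn ℝ 2 w Ω)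
    (hv_cont : ContinuousOn v (closure Ω)) (hv_C2 : ContDiffOn ℝ 2 v Ω)
    (hv_nonneg : ∀ z ∈ closure Ω, 0 ≤ v z)
    (hk_cont : ContinuousOn k (closure Ω)) (hg_cont : ContinuousOn g (closure Ω))
    (hkbar_cont : ContinuousOn kbar (closure Ω)) (hgbar_cont : ContinuousOn gbar (closure Ω))
    (hk_ge : ∀ z ∈ closure Ω, kbar z ≤ k z)
    (hkbar_pos : ∀ z ∈ closure Ω, 0 < kbar z)
    (hg_le : ∀ z ∈ closure Ω, |g z| ≤ gbar z)
    (hw_eq : ∀ z ∈ Ω, flatLaplacian w z - (k z) ^ 2 * w z = g z)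
    (hv_eq : ∀ z ∈ Ω, flatLaplacian v z - (kbar z) ^ 2 * v z = -(gbar z))
    (hbdry : ∀ z ∈ frontier Ω, |w z| ≤ v z) :
    ∀ z ∈ closure Ω, |w z| ≤ v z :=
  statement0_general Ω hΩopen hΩbdd w v k g kbar gbar hw_cont hw_C2 hv_cont hv_C2 hv_nonneg hk_ge
    hkbar_pos hg_le hw_eq hv_eq hbdry
end

section
/- The modified Bessel function I₀ satisfies the asymptotic I₀(x) ~ (2πx)^{−1/2}·e^{x} as x → +∞; that is, lim_{x→∞} I₀(x)·√(2πx)·e^{−x} = 1. -/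
/-!
Expanding `exp (x cos θ)` in powers of `x` and integrating termwise against the moments of
`cos` gives `I₀(x) = π⁻¹ ∫₀^π exp (x cos θ) dθ`. Hence
`I₀(x) e^{-x} = π⁻¹ ∫₀^π exp (x (cos θ - 1)) dθ`, a Laplace integral concentrated near `θ = 0`:
substituting `θ = t / √x`, the integrand `exp (x (cos (t / √x) - 1))` tends to `exp (-t² / 2)`
and is dominated by `exp (-2 t² / π²)`, so `√x` times the integral
tends to `∫₀^∞ exp (-t² / 2) dt = √(2π) / 2`.
-/

open Real Filter Topology MeasureTheory Set

/-- The modified Bessel function of the first kind,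
`I₀(x) = ∑ₖ (x/2)^(2k) / (k!)²`. -/
noncomputable def besselI0 (x : ℝ) : ℝ :=
  ∑' k : ℕ, (x / 2) ^ (2 * k) / (Nat.factorial k : ℝ) ^ 2

theorem integral_cos_pow_odd (k : ℕ) : ∫ θ in 0..π, cos θ ^ (2 * k + 1) = 0 := by
  induction k with
  | zero => simp
  | succ k ih => simp [show 2 * (k + 1) + 1 = 2 * k + 1 + 2 by ring, integral_cos_pow, ih]

theorem integral_cos_pow_even (k : ℕ) :
    ∫ θ in 0..π, cos θ ^ (2 * k) = π * (2 * k).factorial / (4 ^ k * (k.factorial : ℝ) ^ 2) := by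
  induction k with
  | zero => simp
  | succ k ih =>
    rw [show 2 * (k + 1) = 2 * k + 2 by ring, integral_cos_pow, ih, Nat.factorial_succ,
      Nat.factorial_succ, Nat.factorial_succ]
    simp only [sin_pi, sin_zero, mul_zero, sub_zero, zero_div, zero_add]
    push_cast
    field_simp
    ring

theorem hasSum_integral_exp_mul_cos (x a b : ℝ) :
    HasSum (fun n : ℕ => x ^ n / n.factorial * ∫ θ in a..b, cos θ ^ n)
      (∫ θ in a..b, exp (x * cos θ)) := by
  have hsum := intervalIntegral.hasSum_integral_of_dominated_convergence (μ := volume) (a := a)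
    (b := b) (F := fun (n : ℕ) θ => (x * cos θ) ^ n / n.factorial) (f := fun θ => exp (x * cos θ))
    (fun n _ => |x| ^ n / n.factorial) (fun n => by fun_prop) (fun n => ?_)
    (.of_forall fun _ _ => Real.summable_pow_div_factorial |x|) intervalIntegrable_const
    (.of_forall fun θ _ => ?_)
  · refine hsum.congr_fun fun n => ?_
    rw [← intervalIntegral.integral_const_mul]
    simp only [mul_pow]
    ring_nf
  · refine .of_forall fun θ _ => ?_
    rw [norm_div, norm_pow, Real.norm_eq_abs, abs_mul, RCLike.norm_natCast]
    gcongr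
    exact mul_le_of_le_one_right (abs_nonneg x) (abs_cos_le_one θ)
  · rw [Real.exp_eq_exp_ℝ]
    exact NormedSpace.expSeries_div_hasSum_exp (x * cos θ)

theorem besselI0_eq_integral (x : ℝ) :
    besselI0 x = π⁻¹ * ∫ θ in 0..π, exp (x * cos θ) := by
  have hsum := (hasSum_integral_exp_mul_cos x 0 π).mul_left π⁻¹
  have hodd : ∀ n ∉ range (2 * ·),
      π⁻¹ * (x ^ n / n.factorial * ∫ θ in 0..π, cos θ ^ n) = 0 := by
    intro n hn
    obtain ⟨k, rfl⟩ : Odd n := Nat.not_even_iff_odd.mp fun ⟨k, hk⟩ => hn ⟨k, by simp only; omega⟩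
    rw [integral_cos_pow_odd, mul_zero, mul_zero]
  refine (((mul_right_injective₀ two_ne_zero).hasSum_iff hodd).mpr hsum).congr_fun
    (fun k => ?_) |>.tsum_eq
  rw [Function.comp_apply, integral_cos_pow_even, div_pow, pow_mul 2]
  field_simp
  norm_num

theorem tendsto_mul_cos_div_sqrt_sub_one (t : ℝ) :
    Tendsto (fun x => x * (cos (t / √x) - 1)) atTop (𝓝 (-(t ^ 2) / 2)) := by
  have hbound : ∀ᶠ x in atTop, |x * (cos (t / √x) - 1) - -(t ^ 2) / 2| ≤ 5 / 96 * t ^ 4 / x := by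
    filter_upwards [eventually_ge_atTop (max 1 (t ^ 2))] with x hx
    have hx0 : 0 < x := one_pos.trans_le ((le_max_left _ _).trans hx)
    have hu : |t / √x| ≤ 1 := by
      rw [abs_div, abs_of_pos (sqrt_pos.mpr hx0), div_le_one (sqrt_pos.mpr hx0), ← sqrt_sq_eq_abs]
      exact sqrt_le_sqrt ((le_max_right _ _).trans hx)
    have hsq : x * (t / √x) ^ 2 = t ^ 2 := by
      rw [div_pow, sq_sqrt hx0.le]; field_simp
    generalize t / √x = u at hu hsq ⊢
    rw [show t ^ 4 = (t ^ 2) ^ 2 by ring, ← hsq]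
    calc |x * (cos u - 1) - -(x * u ^ 2) / 2|
        = x * |cos u - (1 - u ^ 2 / 2)| := by
          rw [← abs_of_pos hx0, ← abs_mul, abs_of_pos hx0]; ring_nf
      _ ≤ x * (|u| ^ 4 * (5 / 96)) := by gcongr; exact cos_bound hu
      _ = 5 / 96 * (x * u ^ 2) ^ 2 / x := by
          rw [pow_abs, abs_of_nonneg (by positivity)]; field_simp
  refine tendsto_iff_norm_sub_tendsto_zero.mpr (squeeze_zero' (.of_forall fun _ => norm_nonneg _)
    hbound ?_)
  exact tendsto_const_nhds.div_atTop tendsto_id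

/-- The integrand after `θ = t / √x`, extended by zero so that dominated convergence applies
on the fixed domain `ℝ`. -/
noncomputable def rescaledKernel (x : ℝ) : ℝ → ℝ :=
  (Ioc 0 (π * √x)).indicator fun t => exp (x * (cos (t / √x) - 1))

theorem integral_rescaledKernel {x : ℝ} (hx : 0 < x) :
    ∫ t, rescaledKernel x t = √x * ∫ θ in 0..π, exp (x * (cos θ - 1)) := by
  have hsx := sqrt_pos.mpr hx
  rw [rescaledKernel, integral_indicator measurableSet_Ioc,
    ← intervalIntegral.integral_of_le (by positivity),
    intervalIntegral.integral_comp_div (fun θ => exp (x * (cos θ - 1))) hsx.ne',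
    zero_div, mul_div_cancel_right₀ _ hsx.ne', smul_eq_mul]

theorem norm_rescaledKernel_le {x : ℝ} (hx : 0 < x) (t : ℝ) :
    ‖rescaledKernel x t‖ ≤ exp (-(2 / π ^ 2) * t ^ 2) := by
  by_cases ht : t ∈ Ioc 0 (π * √x)
  · have hsx := sqrt_pos.mpr hx
    have hu : |t / √x| ≤ π := by
      rw [abs_of_pos (div_pos ht.1 hsx), div_le_iff₀ hsx]; exact ht.2
    have hsq : x * (t / √x) ^ 2 = t ^ 2 := by
      rw [div_pow, sq_sqrt hx.le]; field_simp
    rw [rescaledKernel, indicator_of_mem ht, norm_of_nonneg (exp_pos _).le, exp_le_exp, ← hsq]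
    nlinarith [cos_le_one_sub_mul_cos_sq hu]
  · rw [rescaledKernel, indicator_of_notMem ht, norm_zero]
    positivity

theorem tendsto_rescaledKernel (t : ℝ) :
    Tendsto (rescaledKernel · t) atTop
      (𝓝 ((Ioi 0).indicator (fun t => exp (-(1 / 2) * t ^ 2)) t)) := by
  rcases le_or_gt t 0 with ht | ht
  · have h0 (x : ℝ) : rescaledKernel x t = 0 := indicator_of_notMem (fun h => ht.not_gt h.1) _
    rw [indicator_of_notMem (show t ∉ Ioi 0 from not_lt.mpr ht)]
    simp only [h0, tendsto_const_nhds]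
  · rw [indicator_of_mem (mem_Ioi.mpr ht)]
    have hlim := (continuous_exp.tendsto _).comp (tendsto_mul_cos_div_sqrt_sub_one t)
    refine (hlim.congr' ?_).trans_eq (by ring_nf)
    filter_upwards [eventually_ge_atTop ((t / π) ^ 2)] with x hx
    have htx : t ≤ π * √x := by
      rw [← div_le_iff₀' pi_pos]
      exact (le_abs_self _).trans (sqrt_sq_eq_abs (t / π) ▸ sqrt_le_sqrt hx)
    rw [rescaledKernel, indicator_of_mem (show t ∈ Ioc 0 (π * √x) from ⟨ht, htx⟩),
      Function.comp_apply]

theorem tendsto_sqrt_mul_integral_exp_mul_cos_sub_one :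
    Tendsto (fun x => √x * ∫ θ in 0..π, exp (x * (cos θ - 1))) atTop (𝓝 (√(2 * π) / 2)) := by
  have hlim : Tendsto (fun x => ∫ t, rescaledKernel x t) atTop
      (𝓝 (∫ t, (Ioi 0).indicator (fun t => exp (-(1 / 2) * t ^ 2)) t)) :=
    tendsto_integral_filter_of_dominated_convergence (fun t => exp (-(2 / π ^ 2) * t ^ 2))
      (.of_forall fun x => (by fun_prop : Continuous _).aestronglyMeasurable.indicator
        measurableSet_Ioc)
      ((eventually_gt_atTop 0).mono fun x hx => .of_forall (norm_rescaledKernel_le hx))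
      (integrable_exp_neg_mul_sq (by positivity))
      (.of_forall tendsto_rescaledKernel)
  rw [integral_indicator measurableSet_Ioi, integral_gaussian_Ioi,
    show π / (1 / 2) = 2 * π by ring] at hlim
  exact hlim.congr' ((eventually_gt_atTop 0).mono fun x hx => integral_rescaledKernel hx)

theorem besselI0_mul_exp_neg (x : ℝ) :
    besselI0 x * exp (-x) = π⁻¹ * ∫ θ in 0..π, exp (x * (cos θ - 1)) := by
  rw [besselI0_eq_integral, mul_assoc, ← intervalIntegral.integral_mul_const]
  congr 1
  refine intervalIntegral.integral_congr fun θ _ => ?_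
  rw [← exp_add]
  ring_nf

/-- `I₀(x) ~ (2πx)^{−1/2} e^x` as `x → ∞`, i.e.
`I₀(x) √(2πx) e^{−x} → 1`. -/
theorem statement3 :
    Filter.Tendsto (fun x : ℝ => besselI0 x * Real.sqrt (2 * Real.pi * x) * Real.exp (-x))
      Filter.atTop (nhds 1) := by
  have hconst : π⁻¹ * √(2 * π) * (√(2 * π) / 2) = 1 := by
    rw [mul_assoc, ← mul_div_assoc, mul_self_sqrt (by positivity)]
    field_simp
  have hlim := tendsto_sqrt_mul_integral_exp_mul_cos_sub_one.const_mul (π⁻¹ * √(2 * π))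
  rw [hconst] at hlim
  refine hlim.congr fun x => ?_
  rw [mul_right_comm (besselI0 x), besselI0_mul_exp_neg, sqrt_mul (by positivity : 0 ≤ 2 * π) x]
  ring
end
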